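/- Suppose M > 2, T ≥ 2, and t ∈ [T−1, T]. If some particle path rescaled by t exits G²_{M,t}, then either some particle path rescaled by T exits G²_{M/2,T}, or some particle path rescaled by T−1 exits G²_{M/2,T−1}. Formally: for a branching particle system with non-decreasing coordinate paths X_v, Y_v, if there exists v ∈ 𝒩_t with (X_v(·t)/t, Y_v(·t)/t) ∉ G²_{M,t}, then there exists w ∈ 𝒩_T with rescaled path outside G²_{M/2,T} or u ∈ 𝒩_{T−1} with rescaled path outside G²_{M/2,T−1}. -/
import Mathlib


/-- The rescaled path `s ↦ g(sT)/T` lies in `G_{M,T}`, i.e.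
`s/M − 2T^{−2/3} ≤ g(sT)/T ≤ M(s + 2T^{−2/3})` for all `s ∈ [0,1]`. -/
def RescaledInG (M T : ℝ) (g : ℝ → ℝ) : Prop :=
  ∀ s ∈ Set.Icc (0:ℝ) 1,
    s / M - 2 * T ^ (-(2:ℝ)/3) ≤ g (s * T) / T ∧ g (s * T) / T ≤ M * (s + 2 * T ^ (-(2:ℝ)/3))

lemma pow13 {x : ℝ} (hx : 0 < x) : x * x ^ (-(2:ℝ)/3) = x ^ ((1:ℝ)/3) := by
  nth_rewrite 1 [← Real.rpow_one x]
  rw [← Real.rpow_add hx]; norm_num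

lemma key_up {T t : ℝ} (ht : 0 < t) (hT : 0 < T) (hTt : T ≤ 8 * t) :
    T * T ^ (-(2:ℝ)/3) ≤ 2 * (t * t ^ (-(2:ℝ)/3)) := by
  rw [pow13 ht, pow13 hT]
  have h8 : ((8:ℝ)) ^ ((1:ℝ)/3) = 2 := by
    rw [show (8:ℝ) = 2 ^ (3:ℝ) by norm_num [Real.rpow_natCast]]
    rw [← Real.rpow_mul (by norm_num)]; norm_num
  have := Real.rpow_le_rpow hT.le hTt (by norm_num : (0:ℝ) ≤ 1/3)
  rwa [Real.mul_rpow (by norm_num) ht.le, h8] at this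

lemma key_low {T t : ℝ} (hT : 0 < T) (hTt : T ≤ t) :
    T * T ^ (-(2:ℝ)/3) ≤ t * t ^ (-(2:ℝ)/3) := by
  rw [pow13 hT, pow13 (hT.trans_le hTt)]
  exact Real.rpow_le_rpow hT.le hTt (by norm_num)

lemma helper_up {M T t : ℝ} (hM : 0 < M) (hT : 2 ≤ T) (ht1 : T - 1 ≤ t) (ht2 : t ≤ T)
    {g h : ℝ → ℝ} (hagree : ∀ s ≤ t, h s = g s) {s : ℝ} (hs : s ∈ Set.Icc (0:ℝ) 1)
    (hviol : ¬ g (s * t) / t ≤ M * (s + 2 * t ^ (-(2:ℝ)/3))) :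
    ¬ RescaledInG (M/2) T h := by
  have ht0 : 0 < t := by linarith
  have hT0 : 0 < T := by linarith
  intro hR
  have hs' : s * t / T ∈ Set.Icc (0:ℝ) 1 := by
    refine ⟨div_nonneg (mul_nonneg hs.1 ht0.le) hT0.le, ?_⟩
    rw [div_le_one hT0]; nlinarith [hs.1, hs.2]
  have h2 := (hR _ hs').2
  rw [div_mul_cancel₀ _ hT0.ne'] at h2
  rw [hagree _ (by nlinarith [hs.1, hs.2] : s * t ≤ t)] at h2
  push_neg at hviol
  rw [lt_div_iff₀ ht0] at hviol
  rw [div_le_iff₀ hT0] at h2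
  have e0 : M * (s + 2 * t ^ (-(2:ℝ)/3)) * t
      = M * (s * t) + 2 * (M * (t * t ^ (-(2:ℝ)/3))) := by ring
  have e1 : M / 2 * (s * t / T + 2 * T ^ (-(2:ℝ)/3)) * T
      = M / 2 * (s * t) + M * (T * T ^ (-(2:ℝ)/3)) := by field_simp
  rw [e0] at hviol
  rw [e1] at h2
  have keyM : M * (T * T ^ (-(2:ℝ)/3)) ≤ 2 * (M * (t * t ^ (-(2:ℝ)/3))) := by
    have := key_up ht0 hT0 (by linarith)
    nlinarith
  have hnn : 0 ≤ M * (s * t) := mul_nonneg hM.le (mul_nonneg hs.1 ht0.le)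
  linarith

lemma helper_low {M T t : ℝ} (hM : 0 < M) (hT : 2 ≤ T) (ht1 : T - 1 ≤ t) (ht2 : t ≤ T)
    {g h : ℝ → ℝ} (hg : Monotone g) (hagree : ∀ s ≤ T - 1, h s = g s)
    {s : ℝ} (hs : s ∈ Set.Icc (0:ℝ) 1)
    (hviol : ¬ s / M - 2 * t ^ (-(2:ℝ)/3) ≤ g (s * t) / t) :
    ¬ RescaledInG (M/2) (T - 1) h := by
  have ht0 : 0 < t := by linarith
  have hT1 : 0 < T - 1 := by linarith
  intro hR
  set s₁ := min (s * t) (T - 1) with hs₁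
  have hst0 : 0 ≤ s * t := mul_nonneg hs.1 ht0.le
  have hs' : s₁ / (T - 1) ∈ Set.Icc (0:ℝ) 1 := by
    refine ⟨div_nonneg (le_min hst0 hT1.le) hT1.le, ?_⟩
    rw [div_le_one hT1]; exact min_le_right _ _
  have h1 := (hR _ hs').1
  rw [div_mul_cancel₀ _ hT1.ne', hagree _ (min_le_right _ _)] at h1
  push_neg at hviol
  rw [div_lt_iff₀ ht0] at hviol
  -- multiply h1 by (T-1)*M
  have h1' := mul_le_mul_of_nonneg_right h1 (by positivity : (0:ℝ) ≤ (T - 1) * M)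
  have e1 : (s₁ / (T - 1) / (M / 2) - 2 * (T - 1) ^ (-(2:ℝ)/3)) * ((T - 1) * M)
      = 2 * s₁ - 2 * (M * ((T - 1) * (T - 1) ^ (-(2:ℝ)/3))) := by field_simp
  have e2 : g s₁ / (T - 1) * ((T - 1) * M) = M * g s₁ := by field_simp
  rw [e1, e2] at h1'
  have hv' := mul_lt_mul_of_pos_left hviol hM
  have e3 : M * ((s / M - 2 * t ^ (-(2:ℝ)/3)) * t)
      = s * t - 2 * (M * (t * t ^ (-(2:ℝ)/3))) := by field_simp
  rw [e3] at hv'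
  have hmono' : M * g s₁ ≤ M * g (s * t) := by
    have := hg (min_le_left (s * t) (T - 1))
    nlinarith
  have keyM : M * ((T - 1) * (T - 1) ^ (-(2:ℝ)/3)) ≤ M * (t * t ^ (-(2:ℝ)/3)) := by
    have := key_low hT1 ht1
    nlinarith
  have hst2 : s * t ≤ 2 * s₁ := by
    rcases min_cases (s * t) (T - 1) with ⟨he, _⟩ | ⟨he, _⟩
    · rw [hs₁, he]; linarith
    · rw [hs₁, he]; nlinarith [hs.2]
  linarith


/-- Suppose `M > 2`, `T ≥ 2` and `t ∈ [T−1, T]`. In a branching system with non-decreasing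
coordinate paths, where every particle alive at time `t` has a descendant alive at time `T`
and an ancestor alive at time `T−1` whose paths agree with it on the common time interval:
if some particle in `𝒩_t` has `t`-rescaled path outside `G²_{M,t}`, then some particle of
`𝒩_T` has `T`-rescaled path outside `G²_{M/2,T}` or some particle of `𝒩_{T−1}` has
`(T−1)`-rescaled path outside `G²_{M/2,T−1}`. -/
theorem rescaling_bad_paths {ι : Type*} (𝒩 : ℝ → Set ι) (X Y : ι → ℝ → ℝ)
    (M T t : ℝ) (hM : 2 < M) (hT : 2 ≤ T) (ht : t ∈ Set.Icc (T - 1) T)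
    (hmono : ∀ v : ι, Monotone (X v) ∧ Monotone (Y v))
    (hdesc : ∀ v ∈ 𝒩 t, ∃ w ∈ 𝒩 T, ∀ s ≤ t, X w s = X v s ∧ Y w s = Y v s)
    (hanc : ∀ v ∈ 𝒩 t, ∃ u ∈ 𝒩 (T - 1), ∀ s ≤ T - 1, X u s = X v s ∧ Y u s = Y v s)
    (hbad : ∃ v ∈ 𝒩 t, ¬ (RescaledInG M t (X v) ∧ RescaledInG M t (Y v))) :
    (∃ w ∈ 𝒩 T, ¬ (RescaledInG (M/2) T (X w) ∧ RescaledInG (M/2) T (Y w))) ∨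
    (∃ u ∈ 𝒩 (T - 1), ¬ (RescaledInG (M/2) (T - 1) (X u) ∧ RescaledInG (M/2) (T - 1) (Y u))) := by
  obtain ⟨v, hv, hnv⟩ := hbad
  obtain ⟨w, hw, hwa⟩ := hdesc v hv
  obtain ⟨u, hu, hua⟩ := hanc v hv
  have hM0 : (0:ℝ) < M := by linarith
  have ht1 := ht.1
  have ht2 := ht.2
  rcases not_and_or.mp hnv with hbX | hbY
  · simp only [RescaledInG, not_forall] at hbX
    obtain ⟨s, hs, hsv⟩ := hbX
    by_cases hlow : s / M - 2 * t ^ (-(2:ℝ)/3) ≤ X v (s * t) / t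
    · have hup : ¬ X v (s * t) / t ≤ M * (s + 2 * t ^ (-(2:ℝ)/3)) := fun h => hsv ⟨hlow, h⟩
      exact Or.inl ⟨w, hw, fun hc =>
        helper_up hM0 hT ht1 ht2 (fun r hr => (hwa r hr).1) hs hup hc.1⟩
    · exact Or.inr ⟨u, hu, fun hc =>
        helper_low hM0 hT ht1 ht2 (hmono v).1 (fun r hr => (hua r hr).1) hs hlow hc.1⟩
  · simp only [RescaledInG, not_forall] at hbY
    obtain ⟨s, hs, hsv⟩ := hbY
    by_cases hlow : s / M - 2 * t ^ (-(2:ℝ)/3) ≤ Y v (s * t) / t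
    · have hup : ¬ Y v (s * t) / t ≤ M * (s + 2 * t ^ (-(2:ℝ)/3)) := fun h => hsv ⟨hlow, h⟩
      exact Or.inl ⟨w, hw, fun hc =>
        helper_up hM0 hT ht1 ht2 (fun r hr => (hwa r hr).2) hs hup hc.2⟩
    · exact Or.inr ⟨u, hu, fun hc =>
        helper_low hM0 hT ht1 ht2 (hmono v).2 (fun r hr => (hua r hr).2) hs hlow hc.2⟩
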